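/- For every natural number n, the 2-abelian complexity of the Thue–Morse word satisfies P(4n+1) = P(2n+1). -/

import Mathlib

open Fin.NatCast

/-- The Thue–Morse sequence: sum of binary digits of `n`, mod 2. -/
def tm (n : ℕ) : Fin 2 := ((Nat.digits 2 n).sum : Fin 2)

/-- The factor of the Thue–Morse word of length `n` starting at position `i`. -/
def tmWord (i n : ℕ) : List (Fin 2) := (List.range n).map (fun j => tm (i + j))

/-- A binary word is a factor of the Thue–Morse word. -/
def IsFactor (w : List (Fin 2)) : Prop := ∃ i : ℕ, w = tmWord i w.length

/-- Number of occurrences of the word `x` as a factor of `u`. -/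
def occCount (u x : List (Fin 2)) : ℕ :=
  ((List.range u.length).filter (fun i => (u.drop i).take x.length = x)).length

/-- Two binary words (of equal length) are 2-abelian equivalent: same first letter,
same last letter, and the same number of occurrences of every word of length 2. -/
def TwoAbelianEquiv (u v : List (Fin 2)) : Prop :=
  u.length = v.length ∧ u.take 1 = v.take 1 ∧
  u.drop (u.length - 1) = v.drop (v.length - 1) ∧
  ∀ x : List (Fin 2), x.length = 2 → occCount u x = occCount v x

/-- `P n` is the 2-abelian complexity of the Thue–Morse word: the number of
2-abelian equivalence classes of factors of length `n`. -/
noncomputable def P (n : ℕ) : ℕ :=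
  Nat.card (Quot (fun u v : {w : List (Fin 2) // w.length = n ∧ IsFactor w} =>
    TwoAbelianEquiv u.1 v.1))

/-- `pword w` counts the pairs in `w`: the total number of occurrences of `00` and `11`. -/
def pword (w : List (Fin 2)) : ℕ := occCount w [0, 0] + occCount w [1, 1]

/-- The set of possible pair counts of Thue–Morse factors of length `n`. -/
def pairs (n : ℕ) : Set ℕ :=
  { m | ∃ w : List (Fin 2), w.length = n ∧ IsFactor w ∧ pword w = m }

/-- The set of possible pair counts of Thue–Morse factors of length `n`
occurring at some odd position (pure odd factors). -/
def PAIRS (n : ℕ) : Set ℕ := { m | ∃ i : ℕ, i % 2 = 1 ∧ pword (tmWord i n) = m }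

/-!
Given its length, the 2-abelian class of a binary word is determined by its first and last
letters and its numbers of occurrences of `00` and `11`. A factor of `t` of odd length `2k+1`
is `μ(w)` with its last or first letter removed, for a factor `w` of length `k+1` and
`μ : 0 ↦ 01, 1 ↦ 10`. Its `00`s and `11`s are the `10`s and `01`s of `w`, and its end letters
are those of `w`, complemented when it starts at an odd position. Hence `P(2k+1)` counts the
profiles (ends, `#10`, `#01`) of factors of length `k+1` together with their end-complemented
copies. Desubstituting once more, and using that the factors of `t` are closed under
complementation, the profiles of factors of length `2n+1` are the images of those of length
`n+1` under the injective map `(a, b, x, y) ↦ (a, b, n - y, n - x)`.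
-/

lemma occCount_nil (x : List (Fin 2)) : occCount [] x = 0 := rfl

lemma occCount_cons (c : Fin 2) (u : List (Fin 2)) (a b : Fin 2) :
    occCount (c :: u) [a, b] =
      (if c = a ∧ u.head? = some b then 1 else 0) + occCount u [a, b] := by
  simp only [occCount, ← List.countP_eq_length_filter, List.length_cons, List.range_succ_eq_map,
    List.countP_cons, List.countP_map]
  rw [add_comm]
  congr 1
  cases u <;> simp

lemma occCount_map_of_injective {f : Fin 2 → Fin 2} (hf : f.Injective) (u x : List (Fin 2)) :
    occCount (u.map f) (x.map f) = occCount u x := by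
  simp only [occCount, List.length_map, ← List.map_drop, ← List.map_take,
    (List.map_injective_iff.mpr hf).eq_iff]

lemma count_eq_occCount_add_getLast (u : List (Fin 2)) (a : Fin 2) :
    u.count a = occCount u [a, 0] + occCount u [a, 1] + if u.getLast? = some a then 1 else 0 := by
  induction u with
  | nil => rfl
  | cons c u ih =>
    rw [List.count_cons, ih, occCount_cons, occCount_cons]
    cases u with
    | nil => simp [occCount_nil]
    | cons d u =>
      simp only [List.head?_cons, List.getLast?_cons_cons, Option.some.injEq, beq_iff_eq]
      fin_cases d <;> by_cases h : c = a <;> simp [h] <;> omega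

lemma count_eq_occCount_add_head (u : List (Fin 2)) (a : Fin 2) :
    u.count a = occCount u [0, a] + occCount u [1, a] + if u.head? = some a then 1 else 0 := by
  induction u with
  | nil => rfl
  | cons c u ih =>
    rw [List.count_cons, ih, occCount_cons, occCount_cons]
    simp only [List.head?_cons, Option.some.injEq, beq_iff_eq]
    fin_cases c <;> by_cases h : u.head? = some a <;> simp [h] <;> omega

lemma occCount_append_singleton (u : List (Fin 2)) (c a b : Fin 2) :
    occCount (u ++ [c]) [a, b] =
      occCount u [a, b] + if u.getLast? = some a ∧ c = b then 1 else 0 := by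
  induction u with
  | nil => simp [occCount_cons, occCount_nil]
  | cons d u ih =>
    rw [List.cons_append, occCount_cons, ih, occCount_cons]
    cases u with
    | nil => simp [occCount_nil]
    | cons e u => simp [add_assoc]

lemma occCount_sum_eq_length_sub_one (u : List (Fin 2)) :
    occCount u [0, 0] + occCount u [0, 1] + occCount u [1, 0] + occCount u [1, 1] =
      u.length - 1 := by
  induction u with
  | nil => rfl
  | cons c u ih =>
    simp only [occCount_cons, List.length_cons, Nat.add_sub_cancel]
    cases u with
    | nil => simp [occCount_nil]
    | cons d u =>
      simp only [List.length_cons, Nat.add_sub_cancel, List.head?_cons, Option.some.injEq] at ih ⊢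
      fin_cases c <;> fin_cases d <;> simp at ih ⊢ <;> omega

lemma occCount_zero_one_add_eq_occCount_one_zero_add (u : List (Fin 2)) :
    occCount u [0, 1] + (if u.getLast? = some 0 then 1 else 0) =
      occCount u [1, 0] + if u.head? = some 0 then 1 else 0 := by
  have hl := count_eq_occCount_add_getLast u 0
  have hh := count_eq_occCount_add_head u 0
  omega

lemma tm_two_mul (j : ℕ) : tm (2 * j) = tm j := by
  rcases Nat.eq_zero_or_pos j with rfl | hj
  · rfl
  · rw [tm, Nat.digits_def' (by norm_num) (by omega), List.sum_cons,
      Nat.mul_mod_right, Nat.mul_div_cancel_left _ two_pos]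
    simp [tm]

lemma tm_two_mul_add_one (j : ℕ) : tm (2 * j + 1) = tm j + 1 := by
  rw [tm, Nat.digits_def' (by norm_num) (by omega), List.sum_cons,
    show (2 * j + 1) % 2 = 1 by omega, show (2 * j + 1) / 2 = j by omega]
  push_cast [tm]
  exact add_comm _ _

lemma tm_two_pow_add (K i : ℕ) (hi : i < 2 ^ K) : tm (2 ^ K + i) = tm i + 1 := by
  induction K generalizing i with
  | zero =>
    obtain rfl : i = 0 := by omega
    exact tm_two_mul_add_one 0
  | succ K ih =>
    obtain ⟨q, rfl | rfl⟩ := Nat.even_or_odd' i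
    · rw [show 2 ^ (K + 1) + 2 * q = 2 * (2 ^ K + q) by ring, tm_two_mul, tm_two_mul,
        ih q (by omega)]
    · rw [show 2 ^ (K + 1) + (2 * q + 1) = 2 * (2 ^ K + q) + 1 by ring, tm_two_mul_add_one,
        tm_two_mul_add_one, ih q (by omega)]

@[simp]
lemma tmWord_length (i n : ℕ) : (tmWord i n).length = n := by simp [tmWord]

lemma tmWord_succ (i n : ℕ) : tmWord i (n + 1) = tmWord i n ++ [tm (i + n)] := by
  simp [tmWord, List.range_succ]

lemma tmWord_succ_eq_cons (i n : ℕ) : tmWord i (n + 1) = tm i :: tmWord (i + 1) n := by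
  simp [tmWord, List.range_succ_eq_map, Nat.add_right_comm, Nat.add_assoc]

lemma head?_tmWord (i n : ℕ) : (tmWord i (n + 1)).head? = some (tm i) := by
  rw [tmWord_succ_eq_cons, List.head?_cons]

lemma getLast?_tmWord (i n : ℕ) : (tmWord i (n + 1)).getLast? = some (tm (i + n)) := by
  rw [tmWord_succ, List.getLast?_concat]

lemma map_add_one_tmWord {i m K : ℕ} (h : i + m ≤ 2 ^ K) :
    (tmWord i m).map (· + 1) = tmWord (2 ^ K + i) m := by
  simp only [tmWord, List.map_map]
  refine List.map_congr_left fun j hj => ?_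
  rw [List.mem_range] at hj
  simp only [Function.comp_apply, Nat.add_assoc, tm_two_pow_add K (i + j) (by omega)]

lemma exists_tmWord_eq_map_add_one (i m : ℕ) : ∃ i', tmWord i' m = (tmWord i m).map (· + 1) :=
  ⟨_, (map_add_one_tmWord (Nat.lt_two_pow_self (n := i + m)).le).symm⟩

def tmMorphism (w : List (Fin 2)) : List (Fin 2) := w.flatMap fun c => [c, c + 1]

lemma tmMorphism_cons (c : Fin 2) (w : List (Fin 2)) :
    tmMorphism (c :: w) = c :: (c + 1) :: tmMorphism w := rfl

lemma head?_tmMorphism (w : List (Fin 2)) : (tmMorphism w).head? = w.head? := by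
  cases w <;> rfl

lemma occCount_tmMorphism_square (w : List (Fin 2)) (e : Fin 2) :
    occCount (tmMorphism w) [e, e] = occCount w [e + 1, e] := by
  induction w with
  | nil => rfl
  | cons c w ih =>
    rw [tmMorphism_cons, occCount_cons, occCount_cons, ih, occCount_cons, List.head?_cons,
      head?_tmMorphism]
    have h_shift : c + 1 = e ↔ c = e + 1 := by omega
    have h_not_sq : ¬ (c = e ∧ c = e + 1) := by omega
    simp only [Option.some.injEq, h_shift, h_not_sq, if_false, zero_add]

lemma tmWord_two_mul (j k : ℕ) : tmWord (2 * j) (2 * k) = tmMorphism (tmWord j k) := by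
  induction k generalizing j with
  | zero => rfl
  | succ k ih =>
    rw [show 2 * (k + 1) = 2 * k + 1 + 1 by ring, tmWord_succ_eq_cons, tmWord_succ_eq_cons,
      tmWord_succ_eq_cons, tmMorphism_cons, show 2 * j + 1 + 1 = 2 * (j + 1) by ring, ih,
      tm_two_mul, tm_two_mul_add_one]

lemma occCount_tmWord_two_mul_square (j k : ℕ) (e : Fin 2) :
    occCount (tmWord (2 * j) (2 * k + 1)) [e, e] = occCount (tmWord j (k + 1)) [e + 1, e] := by
  have h : tmMorphism (tmWord j (k + 1)) = tmWord (2 * j) (2 * k + 1) ++ [tm (j + k) + 1] := by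
    rw [← tmWord_two_mul, show 2 * (k + 1) = 2 * k + 1 + 1 by ring, tmWord_succ,
      show 2 * j + (2 * k + 1) = 2 * (j + k) + 1 by ring, tm_two_mul_add_one]
  rw [← occCount_tmMorphism_square, h, occCount_append_singleton, getLast?_tmWord,
    show 2 * j + 2 * k = 2 * (j + k) by ring, tm_two_mul,
    if_neg (by simp only [Option.some.injEq]; omega), add_zero]

lemma occCount_tmWord_two_mul_add_one_square (j k : ℕ) (e : Fin 2) :
    occCount (tmWord (2 * j + 1) (2 * k + 1)) [e, e] =
      occCount (tmWord j (k + 1)) [e + 1, e] := by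
  have h : tmMorphism (tmWord j (k + 1)) = tm j :: tmWord (2 * j + 1) (2 * k + 1) := by
    rw [← tmWord_two_mul, show 2 * (k + 1) = 2 * k + 1 + 1 by ring, tmWord_succ_eq_cons,
      tm_two_mul]
  rw [← occCount_tmMorphism_square, h, occCount_cons, head?_tmWord, tm_two_mul_add_one,
    if_neg (by simp only [Option.some.injEq]; omega), zero_add]

abbrev Profile := Option (Fin 2) × Option (Fin 2) × ℕ × ℕ

def sqProfile (u : List (Fin 2)) : Profile :=
  (u.head?, u.getLast?, occCount u [0, 0], occCount u [1, 1])

def mixProfile (u : List (Fin 2)) : Profile :=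
  (u.head?, u.getLast?, occCount u [1, 0], occCount u [0, 1])

def flipEnds (q : Profile) : Profile := (q.1.map (· + 1), q.2.1.map (· + 1), q.2.2)

def reflectCounts (n : ℕ) (q : Profile) : Profile := (q.1, q.2.1, n - q.2.2.2, n - q.2.2.1)

lemma Option.toList_inj {α : Type*} {a b : Option α} : a.toList = b.toList ↔ a = b := by
  cases a <;> cases b <;> simp

lemma drop_length_sub_one_eq_getLast? (u : List (Fin 2)) :
    u.drop (u.length - 1) = u.getLast?.toList := by
  rcases eq_or_ne u [] with rfl | hu
  · rfl
  · rw [List.drop_length_sub_one hu, List.getLast?_eq_some_getLast hu, Option.toList_some]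

lemma twoAbelianEquiv_iff_sqProfile_eq {u v : List (Fin 2)} (h : u.length = v.length) :
    TwoAbelianEquiv u v ↔ sqProfile u = sqProfile v := by
  simp only [TwoAbelianEquiv, sqProfile, List.take_one, drop_length_sub_one_eq_getLast?,
    Option.toList_inj, Prod.mk.injEq]
  rw [and_iff_right h]
  constructor
  · rintro ⟨hh, hl, hx⟩
    exact ⟨hh, hl, hx _ rfl, hx _ rfl⟩
  · rintro ⟨hh, hl, h00, h11⟩
    refine ⟨hh, hl, fun x hx => ?_⟩
    obtain ⟨a, b, rfl⟩ := List.length_eq_two.mp hx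
    have su := occCount_sum_eq_length_sub_one u
    have sv := occCount_sum_eq_length_sub_one v
    have du := occCount_zero_one_add_eq_occCount_one_zero_add u
    have dv := occCount_zero_one_add_eq_occCount_one_zero_add v
    rw [hh, hl] at du
    fin_cases a <;> fin_cases b <;> simp <;> omega

lemma P_eq_ncard_range (n : ℕ) : P n = (Set.range fun i => sqProfile (tmWord i n)).ncard := by
  let F := {w : List (Fin 2) // w.length = n ∧ IsFactor w}
  have hr : (fun u v : F => TwoAbelianEquiv u.1 v.1) =
      (Setoid.ker fun u : F => sqProfile u.1).r := by
    funext u v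
    exact propext (twoAbelianEquiv_iff_sqProfile_eq (u.2.1.trans v.2.1.symm))
  have hrange : Set.range (fun u : F => sqProfile u.1) =
      Set.range fun i => sqProfile (tmWord i n) := by
    ext q
    constructor
    · rintro ⟨⟨w, rfl, i, hi⟩, rfl⟩
      exact ⟨i, congrArg sqProfile hi.symm⟩
    · rintro ⟨i, rfl⟩
      exact ⟨⟨tmWord i n, tmWord_length i n, i, by rw [tmWord_length]⟩, rfl⟩
  rw [P, hr, ← Nat.card_coe_set_eq, ← hrange]
  exact Nat.card_congr (Setoid.quotientKerEquivRange _)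

lemma sqProfile_tmWord_two_mul (j k : ℕ) :
    sqProfile (tmWord (2 * j) (2 * k + 1)) = mixProfile (tmWord j (k + 1)) := by
  rw [sqProfile, mixProfile, head?_tmWord, head?_tmWord, getLast?_tmWord, getLast?_tmWord,
    occCount_tmWord_two_mul_square, occCount_tmWord_two_mul_square, tm_two_mul,
    show 2 * j + 2 * k = 2 * (j + k) by ring, tm_two_mul]
  rfl

lemma sqProfile_tmWord_two_mul_add_one (j k : ℕ) :
    sqProfile (tmWord (2 * j + 1) (2 * k + 1)) = flipEnds (mixProfile (tmWord j (k + 1))) := by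
  rw [sqProfile, mixProfile, head?_tmWord, head?_tmWord, getLast?_tmWord, getLast?_tmWord,
    occCount_tmWord_two_mul_add_one_square, occCount_tmWord_two_mul_add_one_square,
    tm_two_mul_add_one, show 2 * j + 1 + 2 * k = 2 * (j + k) + 1 by ring, tm_two_mul_add_one]
  rfl

def mixProfiles (m : ℕ) : Set Profile := Set.range fun i => mixProfile (tmWord i m)

lemma P_two_mul_add_one (k : ℕ) :
    P (2 * k + 1) = (mixProfiles (k + 1) ∪ flipEnds '' mixProfiles (k + 1)).ncard := by
  rw [P_eq_ncard_range]
  congr 1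
  ext q
  constructor
  · rintro ⟨i, rfl⟩
    obtain ⟨j, rfl | rfl⟩ := Nat.even_or_odd' i
    · exact Or.inl ⟨j, (sqProfile_tmWord_two_mul j k).symm⟩
    · exact Or.inr ⟨_, ⟨j, rfl⟩, (sqProfile_tmWord_two_mul_add_one j k).symm⟩
  · rintro (⟨j, rfl⟩ | ⟨_, ⟨j, rfl⟩, rfl⟩)
    · exact ⟨2 * j, sqProfile_tmWord_two_mul j k⟩
    · exact ⟨2 * j + 1, sqProfile_tmWord_two_mul_add_one j k⟩

lemma mixProfile_eq_reflectCounts {v w : List (Fin 2)} {n : ℕ} (hv : v.length = 2 * n + 1)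
    (hw : w.length = n + 1) (hh : v.head? = w.head?) (hl : v.getLast? = w.getLast?)
    (hp : pword v = occCount w [0, 1] + occCount w [1, 0]) :
    mixProfile v = reflectCounts n (mixProfile w) := by
  -- `#01 + #10` of `v` is fixed by its length and `pword v`, and `#01 - #10` by its end letters.
  have sv := occCount_sum_eq_length_sub_one v
  have sw := occCount_sum_eq_length_sub_one w
  have dv := occCount_zero_one_add_eq_occCount_one_zero_add v
  have dw := occCount_zero_one_add_eq_occCount_one_zero_add w
  rw [hh, hl] at dv
  rw [hv] at sv
  rw [hw] at sw
  rw [pword] at hp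
  simp only [mixProfile, reflectCounts, hh, hl, Prod.mk.injEq, true_and]
  constructor <;> omega

lemma mixProfile_tmWord_two_mul (j n : ℕ) :
    mixProfile (tmWord (2 * j) (2 * n + 1)) = reflectCounts n (mixProfile (tmWord j (n + 1))) := by
  refine mixProfile_eq_reflectCounts (tmWord_length _ _) (tmWord_length _ _) ?_ ?_ ?_
  · rw [head?_tmWord, head?_tmWord, tm_two_mul]
  · rw [getLast?_tmWord, getLast?_tmWord, show 2 * j + 2 * n = 2 * (j + n) by ring, tm_two_mul]
  · rw [pword, occCount_tmWord_two_mul_square, occCount_tmWord_two_mul_square, add_comm]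
    rfl

lemma mixProfile_tmWord_two_mul_add_one (j n : ℕ) :
    mixProfile (tmWord (2 * j + 1) (2 * n + 1)) =
      reflectCounts n (mixProfile ((tmWord j (n + 1)).map (· + 1))) := by
  have h_inj : Function.Injective (· + 1 : Fin 2 → Fin 2) := add_left_injective 1
  refine mixProfile_eq_reflectCounts (tmWord_length _ _) (by simp) ?_ ?_ ?_
  · rw [List.head?_map, head?_tmWord, head?_tmWord, tm_two_mul_add_one]
    rfl
  · rw [List.getLast?_map, getLast?_tmWord, getLast?_tmWord,
      show 2 * j + 1 + 2 * n = 2 * (j + n) + 1 by ring, tm_two_mul_add_one]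
    rfl
  · rw [pword, occCount_tmWord_two_mul_add_one_square, occCount_tmWord_two_mul_add_one_square,
      ← occCount_map_of_injective h_inj _ [0 + 1, 0],
      ← occCount_map_of_injective h_inj _ [1 + 1, 1]]
    rfl

lemma mixProfiles_two_mul_add_one (n : ℕ) :
    mixProfiles (2 * n + 1) = reflectCounts n '' mixProfiles (n + 1) := by
  ext q
  constructor
  · rintro ⟨i, rfl⟩
    obtain ⟨j, rfl | rfl⟩ := Nat.even_or_odd' i
    · exact ⟨_, ⟨j, rfl⟩, (mixProfile_tmWord_two_mul j n).symm⟩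
    · obtain ⟨j', hj'⟩ := exists_tmWord_eq_map_add_one j (n + 1)
      exact ⟨_, ⟨j', rfl⟩, by dsimp only; rw [hj', mixProfile_tmWord_two_mul_add_one]⟩
  · rintro ⟨_, ⟨j, rfl⟩, rfl⟩
    exact ⟨2 * j, mixProfile_tmWord_two_mul j n⟩

lemma injOn_reflectCounts (n : ℕ) :
    Set.InjOn (reflectCounts n) (mixProfiles (n + 1) ∪ flipEnds '' mixProfiles (n + 1)) := by
  have h_le : ∀ q ∈ mixProfiles (n + 1) ∪ flipEnds '' mixProfiles (n + 1),
      q.2.2.1 ≤ n ∧ q.2.2.2 ≤ n := by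
    rintro q (⟨i, rfl⟩ | ⟨_, ⟨i, rfl⟩, rfl⟩) <;>
    · have := occCount_sum_eq_length_sub_one (tmWord i (n + 1))
      rw [tmWord_length] at this
      simp only [mixProfile, flipEnds]
      omega
  rintro ⟨a, b, x, y⟩ hq ⟨a', b', x', y'⟩ hq' h
  have hq_le := h_le _ hq
  have hq'_le := h_le _ hq'
  simp only [reflectCounts, Prod.mk.injEq] at h hq_le hq'_le ⊢
  obtain ⟨rfl, rfl, hy, hx⟩ := h
  exact ⟨rfl, rfl, by omega, by omega⟩

theorem thueMorse_P_four_n_add_one (n : ℕ) : P (4 * n + 1) = P (2 * n + 1) := by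
  have h_comm : ∀ q, flipEnds (reflectCounts n q) = reflectCounts n (flipEnds q) := fun _ => rfl
  rw [show 4 * n + 1 = 2 * (2 * n) + 1 by ring, P_two_mul_add_one, P_two_mul_add_one,
    mixProfiles_two_mul_add_one, Set.image_comm h_comm, ← Set.image_union,
    (injOn_reflectCounts n).ncard_image]
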